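/- Let n be a unit vector in ℝ³, let v ∈ ℝ³ with ‖v‖ < 1, and let E ∈ ℝ³. Define F := (1 + n·v)·E − (v·E)·(n + v). Then (1 + n·v)·E = (1/(1 − ‖v‖²))·(F + (v·F)·n + v × (v × F)). -/

import Mathlib

/-- The cross product on `ℝ³ = EuclideanSpace ℝ (Fin 3)`. -/
noncomputable def cross3 (a b : EuclideanSpace ℝ (Fin 3)) : EuclideanSpace ℝ (Fin 3) :=
  (WithLp.equiv 2 (Fin 3 → ℝ)).symm
    (crossProduct ((WithLp.equiv 2 (Fin 3 → ℝ)) a) ((WithLp.equiv 2 (Fin 3 → ℝ)) b))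

/-!
Pairing with `v` gives `v·F = (1 - ‖v‖²) (v·E)`. Expanding `v × (v × F)` by the
BAC-CAB rule, the right-hand side becomes `(1 - ‖v‖²) F + (v·F) (n + v)`, which equals
`(1 - ‖v‖²) (F + (v·E) (n + v)) = (1 - ‖v‖²) (1 + n·v) E`.
-/

open RealInnerProductSpace

theorem cross3_cross3 (a b c : EuclideanSpace ℝ (Fin 3)) :
    cross3 a (cross3 b c) = ⟪a, c⟫ • b - ⟪b, a⟫ • c := by
  simp only [cross3, WithLp.equiv_apply, WithLp.equiv_symm_apply,
    cross_cross_eq_smul_sub_smul']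
  rw [EuclideanSpace.inner_eq_star_dotProduct, EuclideanSpace.inner_eq_star_dotProduct]
  simp only [star_trivial, dotProduct_comm (WithLp.ofLp b), dotProduct_comm (WithLp.ofLp c)]
  rfl

theorem cross3_self_cross3 (v w : EuclideanSpace ℝ (Fin 3)) :
    cross3 v (cross3 v w) = ⟪v, w⟫ • v - ‖v‖ ^ 2 • w := by
  rw [cross3_cross3, real_inner_self_eq_norm_sq]

section AccelerationForm

variable {V : Type*} [NormedAddCommGroup V] [InnerProductSpace ℝ V]

def accelerationForm (n v E : V) : V :=
  (1 + ⟪n, v⟫) • E - ⟪v, E⟫ • (n + v)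

theorem inner_accelerationForm (n v E : V) :
    ⟪v, accelerationForm n v E⟫ = (1 - ‖v‖ ^ 2) * ⟪v, E⟫ := by
  simp only [accelerationForm, inner_sub_right, inner_smul_right, inner_add_right,
    real_inner_self_eq_norm_sq, real_inner_comm n v]
  ring

theorem accelerationForm_add_inner_smul (n v E : V) :
    accelerationForm n v E + ⟪v, accelerationForm n v E⟫ • (n + v) -
        ‖v‖ ^ 2 • accelerationForm n v E = (1 - ‖v‖ ^ 2) • (1 + ⟪n, v⟫) • E := by
  rw [inner_accelerationForm]
  simp only [accelerationForm, mul_smul, smul_add, smul_sub, sub_smul, one_smul]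
  abel

end AccelerationForm

theorem electric_field_recovery_general
    (n v E : EuclideanSpace ℝ (Fin 3)) (hv : ‖v‖ < 1)
    (F : EuclideanSpace ℝ (Fin 3))
    (hF : F = (1 + (inner ℝ n v : ℝ)) • E - (inner ℝ v E : ℝ) • (n + v)) :
    (1 + (inner ℝ n v : ℝ)) • E =
      (1 / (1 - ‖v‖ ^ 2)) • (F + (inner ℝ v F : ℝ) • n + cross3 v (cross3 v F)) := by
  have hden : 1 - ‖v‖ ^ 2 ≠ 0 := by
    have : ‖v‖ ^ 2 < 1 := pow_lt_one₀ (norm_nonneg v) hv two_ne_zero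
    linarith
  have hF' : F = accelerationForm n v E := hF
  rw [one_div, eq_inv_smul_iff₀ hden, cross3_self_cross3, hF', ← accelerationForm_add_inner_smul]
  module

/-- Inversion of the electromagnetic acceleration form: for a unit vector `n`,
`‖v‖ < 1`, and `F = (1 + n·v) • E − (v·E) • (n + v)`, one recovers
`(1 + n·v) • E = (1/(1 − ‖v‖²)) • (F + (v·F) • n + v × (v × F))`. -/
theorem electric_field_recovery
    (n v E : EuclideanSpace ℝ (Fin 3)) (hn : ‖n‖ = 1) (hv : ‖v‖ < 1)
    (F : EuclideanSpace ℝ (Fin 3))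
    (hF : F = (1 + (inner ℝ n v : ℝ)) • E - (inner ℝ v E : ℝ) • (n + v)) :
    (1 + (inner ℝ n v : ℝ)) • E =
      (1 / (1 - ‖v‖ ^ 2)) • (F + (inner ℝ v F : ℝ) • n + cross3 v (cross3 v F)) :=
  electric_field_recovery_general n v E hv F hF
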